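/- For every w ∈ W, in the twisted group algebra Q^{KK}_{t1,t2}(W) one has Δ_w = ∑_{u ≤ w} p(u,w) y_u, where Δ_w := A(w) δ_w with A(w) := ∏_{β ∈ R(w)} (t1 + t2 e^{−β})/(1 − e^{β}) and R(w) is the inversion set of w. Equivalently, the Q_{t1,t2}(Λ)-module isomorphism Φ: Q^{KK}_{t1,t2}(W) → H defined by Φ(y_w) = h_w satisfies Φ(Δ_w) = Y_w. -/

import Mathlib

open CoxeterSystem

/-- The multiplicative group structure (composition) that `AddAut M` carried in the older
Mathlib; it is now an additive group. -/
instance addAutCompGroup (M : Type*) [Add M] : Group (AddAut M) where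
  mul g h := AddEquiv.trans h g
  one := AddEquiv.refl _
  inv := AddEquiv.symm
  mul_assoc _ _ _ := rfl
  one_mul _ := rfl
  mul_one _ := rfl
  inv_mul_cancel := AddEquiv.self_trans_symm

/-- `E(λ) = e^{-λ} - 1`. -/
noncomputable def Eelt {Λ : Type*} [AddCommGroup Λ] {K : Type*} [Field K]
    (exp : Multiplicative Λ →* Kˣ) (lam : Λ) : K :=
  ((exp (Multiplicative.ofAdd (-lam)) : Kˣ) : K) - 1

/-- `p(w,v)`: the coefficient of `h_w` in the expansion `Y_v = ∑_w p(w,v) h_w` of the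
Yang–Baxter basis element `Y_v` in the standard basis (`hb w = h w`). -/
noncomputable def pCoeff {W : Type*} {K : Type*} [Field K] {H : Type*} [Ring H] [Algebra K H]
    (hb : Module.Basis W K H) (Y : W → H) (w v : W) : K :=
  hb.repr (Y v) w

/-- `A_i = (t1 + t2 e^{-α})/(1 - e^{α})` (as a function of the root `α`). -/
noncomputable def Acoef {Λ : Type*} [AddCommGroup Λ] {K : Type*} [Field K]
    (exp : Multiplicative Λ →* Kˣ) (t1 t2 : K) (a : Λ) : K :=
  (t1 + t2 * ((exp (Multiplicative.ofAdd (-a)) : Kˣ) : K)) /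
    (1 - ((exp (Multiplicative.ofAdd a) : Kˣ) : K))

/-- `B_i = (t1 + t2)/(1 - e^{-α})` (as a function of the root `α`). -/
noncomputable def Bcoef {Λ : Type*} [AddCommGroup Λ] {K : Type*} [Field K]
    (exp : Multiplicative Λ →* Kˣ) (t1 t2 : K) (a : Λ) : K :=
  (t1 + t2) / (1 - ((exp (Multiplicative.ofAdd (-a)) : Kˣ) : K))

/-- The generic Demazure–Lusztig element `y_i = A_i δ_{s_i} + B_i` of the twisted group
algebra, where `ι : K → D` is the embedding of the coefficients and `δ` is `w ↦ δ_w`. -/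
noncomputable def yElt {r : ℕ} {W : Type*} [Group W] {M : CoxeterMatrix (Fin r)}
    (cs : CoxeterSystem M W) {Λ : Type*} [AddCommGroup Λ] {K : Type*} [Field K]
    (exp : Multiplicative Λ →* Kˣ) (t1 t2 : K) (α : Fin r → Λ)
    {D : Type*} [Ring D] (ι : K →+* D) (δ : W → D) (i : Fin r) : D :=
  ι (Acoef exp t1 t2 (α i)) * δ (cs.simple i) + ι (Bcoef exp t1 t2 (α i))

/-- `A(w) = ∏_{β ∈ R(w)} (t1 + t2 e^{-β})/(1 - e^{β})`, computed as the product over the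
inversions `β_j = s_{i_1} ⋯ s_{i_{j-1}}(α_{i_j})` attached to a (reduced) word `l` for `w`. -/
noncomputable def Aword {r : ℕ} {W : Type*} [Group W] {M : CoxeterMatrix (Fin r)}
    (cs : CoxeterSystem M W) {Λ : Type*} [AddCommGroup Λ] (wΛ : W →* AddAut Λ)
    (α : Fin r → Λ) {K : Type*} [Field K] (exp : Multiplicative Λ →* Kˣ) (t1 t2 : K)
    (l : List (Fin r)) : K :=
  ∏ j : Fin l.length, Acoef exp t1 t2 (wΛ (cs.wordProd (l.take j)) (α (l.get j)))

/-!
Let `Ψ : H → D` be the `ι`-semilinear map with `Ψ h_u = y_u` (the paper's `Φ` runs the other way).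
The `y_i` satisfy the same quadratic relation `y_i² = (t1 + t2) y_i - t1 t2` as the `h_i`, and
`t1 + t2`, `t1 t2` are `W`-invariant, so `y_w` and `h_w` obey the same recursion on right
multiplication by a simple reflection, ascent or descent; hence `Ψ (x h_i) = Ψ x * y_i`.
By induction along a reduced word, `A(w) δ_w y_i = A(w s_i) δ_{w s_i} + A(w) B(w α_i) δ_w`, and
the last term is cancelled by the correction `(t1 + t2) / w(E(α_i))` in the recursion for `Y`,
because `B(β) = -(t1 + t2) / E(β)`. This gives `A(w) δ_w = Ψ Y_w`.
-/

namespace CoxeterSystem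

variable {B W : Type*} [Group W] {M : CoxeterMatrix B} (cs : CoxeterSystem M W)

theorem isReduced_append_singleton_iff {ω : List B} {i : B} :
    cs.IsReduced (ω ++ [i]) ↔ cs.IsReduced ω ∧ ¬cs.IsRightDescent (cs.wordProd ω) i := by
  constructor
  · intro h
    have hω : cs.IsReduced ω := by simpa using h.take ω.length
    refine ⟨hω, cs.not_isRightDescent_iff.mpr ?_⟩
    rw [← wordProd_singleton, ← wordProd_append, h, hω, List.length_append,
      List.length_singleton]
  · rintro ⟨hω, hi⟩
    rw [IsReduced, wordProd_append, wordProd_singleton, cs.not_isRightDescent_iff.mp hi, hω,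
      List.length_append, List.length_singleton]

theorem IsReduced.induction_append_singleton {p : List B → Prop} (nil : p [])
    (append_singleton : ∀ ω i, cs.IsReduced ω → ¬cs.IsRightDescent (cs.wordProd ω) i →
      p ω → p (ω ++ [i])) {ω : List B} (hω : cs.IsReduced ω) : p ω := by
  induction ω using List.reverseRecOn with
  | nil => exact nil
  | append_singleton ω i ih =>
    obtain ⟨hω', hi⟩ := (cs.isReduced_append_singleton_iff).mp hω
    exact append_singleton ω i hω' hi (ih hω')

variable {R : Type*} [Ring R] {T : W → R} {g : B → R}

theorem commute_of_mul_simple (hT1 : T 1 = 1)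
    (hT : ∀ w i, ¬cs.IsRightDescent w i → T (w * cs.simple i) = T w * g i)
    {c : R} (hc : ∀ i, Commute (g i) c) (w : W) : Commute (T w) c := by
  obtain ⟨ω, hω, rfl⟩ := cs.exists_isReduced w
  refine IsReduced.induction_append_singleton cs (p := fun ω => Commute (T (cs.wordProd ω)) c) ?_
    (fun ω i _ hi ih => ?_) hω
  · rw [wordProd_nil, hT1]
    exact Commute.one_left c
  · rw [wordProd_append, wordProd_singleton, hT _ _ hi]
    exact ih.mul_left (hc i)

theorem mul_eq_of_isRightDescent
    (hT : ∀ w i, ¬cs.IsRightDescent w i → T (w * cs.simple i) = T w * g i)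
    {a b : R} (hsq : ∀ i, g i * g i = a * g i - b) (ha : ∀ w, Commute (T w) a)
    (hb : ∀ w, Commute (T w) b) {w : W} {i : B} (hwi : cs.IsRightDescent w i) :
    T w * g i = a * T w - b * T (w * cs.simple i) := by
  have hw : T w = T (w * cs.simple i) * g i := by
    rw [← hT _ _ (cs.isRightDescent_iff_not_isRightDescent_mul.mp hwi),
      simple_mul_simple_cancel_right]
  rw [hw, mul_assoc, hsq, mul_sub, ← mul_assoc, (ha _).eq, mul_assoc, (hb _).eq]

end CoxeterSystem

lemma mul_self_eq_of_mul_sub_algebraMap_eq_zero {K H : Type*} [CommRing K] [Ring H] [Algebra K H]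
    {x : H} {t1 t2 : K} (hx : (x - algebraMap K H t1) * (x - algebraMap K H t2) = 0) :
    x * x = algebraMap K H (t1 + t2) * x - algebraMap K H (t1 * t2) := by
  rw [← sub_eq_zero, ← hx, map_add, add_mul, map_mul, sub_mul, mul_sub, mul_sub,
    ← Algebra.commutes t2 x]
  abel

namespace Module.Basis

variable {W K H D : Type*} [Fintype W] [CommSemiring K] [Semiring D]

section Module

variable [AddCommMonoid H] [Module K H]

noncomputable def transfer (b : Basis W K H) (φ : K →+* D) (f : W → D) : H →+ D where
  toFun x := ∑ u, φ (b.repr x u) * f u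
  map_zero' := by simp
  map_add' x y := by simp [add_mul, Finset.sum_add_distrib]

variable (b : Basis W K H) (φ : K →+* D) (f : W → D)

lemma transfer_apply (x : H) : b.transfer φ f x = ∑ u, φ (b.repr x u) * f u := rfl

@[simp]
lemma transfer_self (u : W) : b.transfer φ f (b u) = f u := by
  classical
  simp [transfer_apply, Finsupp.single_apply]

lemma transfer_smul (c : K) (x : H) : b.transfer φ f (c • x) = φ c * b.transfer φ f x := by
  simp [transfer_apply, Finset.mul_sum, mul_assoc]

end Module

lemma transfer_mul_right [Semiring H] [Algebra K H] (b : Basis W K H) (φ : K →+* D) (f : W → D)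
    {z : H} {d : D} (hz : ∀ u, b.transfer φ f (b u * z) = f u * d) (x : H) :
    b.transfer φ f (x * z) = b.transfer φ f x * d := by
  calc b.transfer φ f (x * z) = b.transfer φ f ((∑ u, b.repr x u • b u) * z) := by
        rw [b.sum_repr]
    _ = ∑ u, φ (b.repr x u) * (f u * d) := by
        simp only [Finset.sum_mul, map_sum, smul_mul_assoc, transfer_smul, hz]
    _ = b.transfer φ f x * d := by simp only [transfer_apply, Finset.sum_mul, mul_assoc]

end Module.Basis

lemma Module.Basis.transfer_mul_simple {B W : Type*} [Group W] [Fintype W] {M : CoxeterMatrix B}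
    (cs : CoxeterSystem M W) {K H D : Type*} [CommRing K] [Ring H] [Algebra K H] [Ring D]
    (b : Basis W K H) (ι : K →+* D) {T : W → D} {g : B → D} {t1 t2 : K}
    (hb : ∀ u i, ¬cs.IsRightDescent u i → b (u * cs.simple i) = b u * b (cs.simple i))
    (hbquad : ∀ i,
      (b (cs.simple i) - algebraMap K H t1) * (b (cs.simple i) - algebraMap K H t2) = 0)
    (hT : ∀ u i, ¬cs.IsRightDescent u i → T (u * cs.simple i) = T u * g i)
    (hg : ∀ i, g i * g i = ι (t1 + t2) * g i - ι (t1 * t2))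
    (hT₁ : ∀ u, Commute (T u) (ι (t1 + t2))) (hT₂ : ∀ u, Commute (T u) (ι (t1 * t2)))
    (x : H) (i : B) : b.transfer ι T (x * b (cs.simple i)) = b.transfer ι T x * g i := by
  refine b.transfer_mul_right ι T (fun u => ?_) x
  by_cases hui : cs.IsRightDescent u i
  · rw [cs.mul_eq_of_isRightDescent hb
        (fun i => mul_self_eq_of_mul_sub_algebraMap_eq_zero (hbquad i))
        (fun _ => Algebra.commute_algebraMap_right _ _)
        (fun _ => Algebra.commute_algebraMap_right _ _) hui,
      cs.mul_eq_of_isRightDescent hT hg hT₁ hT₂ hui, ← Algebra.smul_def, ← Algebra.smul_def,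
      map_sub, b.transfer_smul, b.transfer_smul, b.transfer_self, b.transfer_self]
  · rw [← hb u i hui, b.transfer_self, hT u i hui]

section Coefficients

variable {Λ K : Type*} [AddCommGroup Λ] [Field K] (exp : Multiplicative Λ →* Kˣ) (t1 t2 : K)

lemma exp_ofAdd_neg (a : Λ) :
    ((exp (Multiplicative.ofAdd (-a)) : Kˣ) : K)
      = ((exp (Multiplicative.ofAdd a) : Kˣ) : K)⁻¹ := by
  rw [ofAdd_neg, map_inv, Units.val_inv_eq_inv_val]

variable {exp} in
lemma exp_ofAdd_ne_one (hexp : Function.Injective exp) {a : Λ} (ha : a ≠ 0) :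
    ((exp (Multiplicative.ofAdd a) : Kˣ) : K) ≠ 1 := by
  rwa [Ne, Units.val_eq_one, ← map_one exp, hexp.eq_iff, ofAdd_eq_one]

section Equivariance

variable {F G : Type*} [FunLike F K K] [RingHomClass F K K] [FunLike G Λ Λ]
  [AddMonoidHomClass G Λ Λ] {σ : F} {f : G}

lemma map_Eelt
    (hσ : ∀ a, σ (exp (Multiplicative.ofAdd a)) = exp (Multiplicative.ofAdd (f a))) (a : Λ) :
    σ (Eelt exp a) = Eelt exp (f a) := by
  simp only [Eelt, map_sub, map_one, hσ, map_neg]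

lemma map_Acoef
    (hσ : ∀ a, σ (exp (Multiplicative.ofAdd a)) = exp (Multiplicative.ofAdd (f a)))
    (h1 : σ t1 = t1) (h2 : σ t2 = t2) (a : Λ) :
    σ (Acoef exp t1 t2 a) = Acoef exp t1 t2 (f a) := by
  simp only [Acoef, map_div₀, map_add, map_mul, map_sub, map_one, hσ, h1, h2, map_neg]

lemma map_Bcoef
    (hσ : ∀ a, σ (exp (Multiplicative.ofAdd a)) = exp (Multiplicative.ofAdd (f a)))
    (h : σ (t1 + t2) = t1 + t2) (a : Λ) :
    σ (Bcoef exp t1 t2 a) = Bcoef exp t1 t2 (f a) := by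
  simp only [Bcoef, map_div₀, h, map_sub, map_one, hσ, map_neg]

end Equivariance

lemma Bcoef_add_div_Eelt (a : Λ) : Bcoef exp t1 t2 a + (t1 + t2) / Eelt exp a = 0 := by
  rw [Bcoef, Eelt, ← neg_sub, div_neg, neg_add_cancel]

variable {exp}

lemma Acoef_mul_Bcoef_neg_add_Bcoef_mul_Acoef {a : Λ}
    (ha : ((exp (Multiplicative.ofAdd a) : Kˣ) : K) ≠ 1) :
    Acoef exp t1 t2 a * Bcoef exp t1 t2 (-a) + Bcoef exp t1 t2 a * Acoef exp t1 t2 a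
      = (t1 + t2) * Acoef exp t1 t2 a := by
  simp only [Acoef, Bcoef, neg_neg, exp_ofAdd_neg]
  field_simp
  ring

lemma Acoef_mul_Acoef_neg_add_Bcoef_mul_self {a : Λ}
    (ha : ((exp (Multiplicative.ofAdd a) : Kˣ) : K) ≠ 1) :
    Acoef exp t1 t2 a * Acoef exp t1 t2 (-a) + Bcoef exp t1 t2 a * Bcoef exp t1 t2 a
      = (t1 + t2) * Bcoef exp t1 t2 a - t1 * t2 := by
  simp only [Acoef, Bcoef, neg_neg, exp_ofAdd_neg]
  field_simp
  ring

end Coefficients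

lemma twisted_mul_self {K D : Type*} [CommRing K] [Ring D] (ι : K →+* D) {d : D} {A B A' B' : K}
    (hdd : d * d = 1) (hA : d * ι A = ι A' * d) (hB : d * ι B = ι B' * d) :
    (ι A * d + ι B) * (ι A * d + ι B) = ι (A * B' + B * A) * d + ι (A * A' + B * B) := by
  have hAA : ι A * d * (ι A * d) = ι (A * A') := by
    rw [mul_assoc, ← mul_assoc d, hA, mul_assoc, hdd, mul_one, ← map_mul]
  have hAB : ι A * d * ι B = ι (A * B') * d := by rw [mul_assoc, hB, ← mul_assoc, ← map_mul]
  rw [add_mul, mul_add, mul_add, hAA, hAB, ← mul_assoc, ← map_mul, ← map_mul, map_add,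
    map_add, add_mul]
  abel

section TwistedGroupAlgebra

variable {r : ℕ} {W : Type*} [Group W] {M : CoxeterMatrix (Fin r)} (cs : CoxeterSystem M W)
  {Λ : Type*} [AddCommGroup Λ] (wΛ : W →* AddAut Λ) (α : Fin r → Λ)
  {K : Type*} [Field K] (exp : Multiplicative Λ →* Kˣ) (t1 t2 : K) (wK : W →* RingAut K)
  {D : Type*} [Ring D] (ι : K →+* D) (δ : W → D)

structure IsTwistedRep : Prop where
  map_one : δ 1 = 1
  map_mul : ∀ u v, δ (u * v) = δ u * δ v
  twist : ∀ w c, δ w * ι c = ι (wK w c) * δ w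

variable {wΛ wK ι δ}

lemma mul_yElt (hδ : IsTwistedRep wK ι δ)
    (hwexp : ∀ (w : W) (lam : Λ),
      wK w ((exp (Multiplicative.ofAdd lam) : Kˣ) : K)
        = ((exp (Multiplicative.ofAdd (wΛ w lam)) : Kˣ) : K))
    (hwt1 : ∀ w : W, wK w t1 = t1) (hwt2 : ∀ w : W, wK w t2 = t2) (a : K) (w : W) (i : Fin r) :
    ι a * δ w * yElt cs exp t1 t2 α ι δ i
      = ι (a * Acoef exp t1 t2 (wΛ w (α i))) * δ (w * cs.simple i)
        + ι (a * Bcoef exp t1 t2 (wΛ w (α i))) * δ w := by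
  have hA : δ w * ι (Acoef exp t1 t2 (α i)) = ι (Acoef exp t1 t2 (wΛ w (α i))) * δ w := by
    rw [hδ.twist, map_Acoef exp t1 t2 (hwexp w) (hwt1 w) (hwt2 w)]
  have hB : δ w * ι (Bcoef exp t1 t2 (α i)) = ι (Bcoef exp t1 t2 (wΛ w (α i))) * δ w := by
    rw [hδ.twist, map_Bcoef exp t1 t2 (hwexp w) (by rw [map_add, hwt1, hwt2])]
  simp only [yElt, mul_add, mul_assoc]
  rw [← mul_assoc (δ w), hA, hB, hδ.map_mul]
  simp only [map_mul, mul_assoc]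

lemma yElt_mul_self (hδ : IsTwistedRep wK ι δ)
    (hwexp : ∀ (w : W) (lam : Λ),
      wK w ((exp (Multiplicative.ofAdd lam) : Kˣ) : K)
        = ((exp (Multiplicative.ofAdd (wΛ w lam)) : Kˣ) : K))
    (hwt1 : ∀ w : W, wK w t1 = t1) (hwt2 : ∀ w : W, wK w t2 = t2) {i : Fin r}
    (hsα : wΛ (cs.simple i) (α i) = -α i)
    (hα : ((exp (Multiplicative.ofAdd (α i)) : Kˣ) : K) ≠ 1) :
    yElt cs exp t1 t2 α ι δ i * yElt cs exp t1 t2 α ι δ i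
      = ι (t1 + t2) * yElt cs exp t1 t2 α ι δ i - ι (t1 * t2) := by
  have hss : δ (cs.simple i) * δ (cs.simple i) = 1 := by
    rw [← hδ.map_mul, cs.simple_mul_simple_self, hδ.map_one]
  have hA : δ (cs.simple i) * ι (Acoef exp t1 t2 (α i))
      = ι (Acoef exp t1 t2 (-α i)) * δ (cs.simple i) := by
    rw [hδ.twist, map_Acoef exp t1 t2 (hwexp _) (hwt1 _) (hwt2 _), hsα]
  have hB : δ (cs.simple i) * ι (Bcoef exp t1 t2 (α i))
      = ι (Bcoef exp t1 t2 (-α i)) * δ (cs.simple i) := by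
    rw [hδ.twist, map_Bcoef exp t1 t2 (hwexp _) (by rw [map_add, hwt1, hwt2]), hsα]
  rw [yElt, twisted_mul_self ι hss hA hB, Acoef_mul_Bcoef_neg_add_Bcoef_mul_Acoef t1 t2 hα,
    Acoef_mul_Acoef_neg_add_Bcoef_mul_self t1 t2 hα, map_sub, map_mul, map_mul, mul_add,
    mul_assoc, add_sub_assoc]

lemma yElt_commute (hδ : IsTwistedRep wK ι δ) {c : K} (i : Fin r) (hc : wK (cs.simple i) c = c) :
    Commute (yElt cs exp t1 t2 α ι δ i) (ι c) := by
  have hs : Commute (δ (cs.simple i)) (ι c) := by rw [Commute, SemiconjBy, hδ.twist, hc]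
  exact (((Commute.all _ c).map ι).mul_left hs).add_left ((Commute.all _ c).map ι)

lemma Aword_append_singleton (l : List (Fin r)) (i : Fin r) :
    Aword cs wΛ α exp t1 t2 (l ++ [i])
      = Aword cs wΛ α exp t1 t2 l * Acoef exp t1 t2 (wΛ (cs.wordProd l) (α i)) := by
  have hlen : l.length + 1 = (l ++ [i]).length := by simp
  rw [Aword, Aword, ← Fin.prod_congr' _ hlen, Fin.prod_univ_castSucc]
  congr 1
  · refine Finset.prod_congr rfl fun j _ => ?_
    simp [List.take_append_of_le_length j.isLt.le, List.getElem_append_left j.isLt]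
  · simp

lemma Aword_mul_delta_eq (hδ : IsTwistedRep wK ι δ)
    (hwexp : ∀ (w : W) (lam : Λ),
      wK w ((exp (Multiplicative.ofAdd lam) : Kˣ) : K)
        = ((exp (Multiplicative.ofAdd (wΛ w lam)) : Kˣ) : K))
    (hwt1 : ∀ w : W, wK w t1 = t1) (hwt2 : ∀ w : W, wK w t2 = t2)
    {H : Type*} [Ring H] [Algebra K H] {g : Fin r → H} {Y : W → H} (hY1 : Y 1 = 1)
    (hYrec : ∀ w i, ¬cs.IsRightDescent w i →
      Y (w * cs.simple i) = Y w * (g i + algebraMap K H ((t1 + t2) / wK w (Eelt exp (α i)))))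
    {Ψ : H →+ D} (hΨ1 : Ψ 1 = 1) (hΨsmul : ∀ (c : K) x, Ψ (c • x) = ι c * Ψ x)
    (hΨmul : ∀ x i, Ψ (x * g i) = Ψ x * yElt cs exp t1 t2 α ι δ i)
    {l : List (Fin r)} (hl : cs.IsReduced l) :
    ι (Aword cs wΛ α exp t1 t2 l) * δ (cs.wordProd l) = Ψ (Y (cs.wordProd l)) := by
  refine IsReduced.induction_append_singleton cs
    (p := fun l => ι (Aword cs wΛ α exp t1 t2 l) * δ (cs.wordProd l) = Ψ (Y (cs.wordProd l)))
    ?_ (fun l i _ hi ih => ?_) hl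
  · simp [Aword, hδ.map_one, hY1, hΨ1]
  · set a := Aword cs wΛ α exp t1 t2 l
    set β := wΛ (cs.wordProd l) (α i)
    have hvanish : a * Bcoef exp t1 t2 β + (t1 + t2) / Eelt exp β * a = 0 := by
      rw [mul_comm _ a, ← mul_add, Bcoef_add_div_Eelt, mul_zero]
    rw [wordProd_append, wordProd_singleton, Aword_append_singleton, hYrec _ _ hi, mul_add,
      map_add, ← Algebra.commutes, ← Algebra.smul_def, hΨsmul, hΨmul, ← ih,
      mul_yElt cs α exp t1 t2 hδ hwexp hwt1 hwt2, map_Eelt exp (hwexp _), add_assoc,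
      ← mul_assoc, ← map_mul, ← add_mul, ← map_add, hvanish, map_zero, zero_mul, add_zero]

end TwistedGroupAlgebra

theorem delta_eq_sum_pCoeff_y_general
    {r : ℕ} {W : Type*} [Group W] [Fintype W] {M : CoxeterMatrix (Fin r)}
    (cs : CoxeterSystem M W)
    {Λ : Type*} [AddCommGroup Λ] (wΛ : W →* AddAut Λ) (α : Fin r → Λ)
    (coroot : Fin r → (Λ →+ ℤ))
    (hact : ∀ (i : Fin r) (lam : Λ), wΛ (cs.simple i) lam = lam - (coroot i lam) • α i)
    (hαα : ∀ i : Fin r, coroot i (α i) = 2)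
    {K : Type*} [Field K] (exp : Multiplicative Λ →* Kˣ)
    (hexp_inj : Function.Injective exp)
    (t1 t2 : K) (wK : W →* RingAut K)
    (hwexp : ∀ (w : W) (lam : Λ),
      wK w ((exp (Multiplicative.ofAdd lam) : Kˣ) : K)
        = ((exp (Multiplicative.ofAdd (wΛ w lam)) : Kˣ) : K))
    (hwt1 : ∀ w : W, wK w t1 = t1) (hwt2 : ∀ w : W, wK w t2 = t2)
    {H : Type*} [Ring H] [Algebra K H]
    (h : W → H) (hb : Module.Basis W K H)
    (hbasis : ∀ w : W, hb w = h w)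
    (hone : h 1 = 1)
    (hmul : ∀ u v : W, cs.length (u * v) = cs.length u + cs.length v →
      h (u * v) = h u * h v)
    (hquad : ∀ i : Fin r,
      (h (cs.simple i) - algebraMap K H t1) * (h (cs.simple i) - algebraMap K H t2) = 0)
    (Y : W → H) (hY1 : Y 1 = 1)
    (hYrec : ∀ (w : W) (i : Fin r), cs.length (w * cs.simple i) = cs.length w + 1 →
      Y (w * cs.simple i)
        = Y w * (h (cs.simple i) + algebraMap K H ((t1 + t2) / wK w (Eelt exp (α i)))))
    {D : Type*} [Ring D] (ι : K →+* D) (δ : W → D)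
    (hδ1 : δ 1 = 1)
    (hδmul : ∀ u v : W, δ (u * v) = δ u * δ v)
    (hδcomm : ∀ (w : W) (c : K), δ w * ι c = ι (wK w c) * δ w)
    (yD : W → D) (hyD_one : yD 1 = 1)
    (hyD_rec : ∀ (w : W) (i : Fin r), cs.length (w * cs.simple i) = cs.length w + 1 →
      yD (w * cs.simple i) = yD w * yElt cs exp t1 t2 α ι δ i)
    (w : W) (l : List (Fin r)) (hl : cs.wordProd l = w) (hred : cs.IsReduced l) :
    ι (Aword cs wΛ α exp t1 t2 l) * δ w = ∑ u : W, ι (pCoeff hb Y u w) * yD u := by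
  subst hl
  obtain rfl : h = hb := (funext hbasis).symm
  have hδ : IsTwistedRep wK ι δ := ⟨hδ1, hδmul, hδcomm⟩
  have hyD (u i) (hi : ¬cs.IsRightDescent u i) :
      yD (u * cs.simple i) = yD u * yElt cs exp t1 t2 α ι δ i :=
    hyD_rec u i (cs.not_isRightDescent_iff.mp hi)
  have hyD_comm (c : K) (hc : ∀ w, wK w c = c) (u : W) : Commute (yD u) (ι c) :=
    cs.commute_of_mul_simple hyD_one hyD (fun i => yElt_commute cs α exp t1 t2 hδ i (hc _)) u
  have hy_sq (i : Fin r) := yElt_mul_self cs α exp t1 t2 hδ hwexp hwt1 hwt2 (i := i)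
    (by rw [hact, hαα, two_zsmul]; abel)
    (exp_ofAdd_ne_one hexp_inj fun h0 => by simpa [h0] using hαα i)
  have hΨmul := hb.transfer_mul_simple cs ι
    (fun u i hi => hmul u _ (by rw [cs.length_simple, cs.not_isRightDescent_iff.mp hi])) hquad
    hyD hy_sq (hyD_comm _ fun w => by rw [map_add, hwt1, hwt2])
    (hyD_comm _ fun w => by rw [map_mul, hwt1, hwt2])
  exact Aword_mul_delta_eq cs α exp t1 t2 hδ hwexp hwt1 hwt2 hY1
    (fun w i hi => hYrec w i (cs.not_isRightDescent_iff.mp hi))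
    (by rw [← hone, hb.transfer_self, hyD_one]) (hb.transfer_smul ι yD) hΨmul hred

/-- `Δ_w = ∑_{u ≤ w} p(u,w) y_u` in the twisted group algebra, where
`Δ_w = A(w) δ_w` and `A(w) = ∏_{β ∈ R(w)} (t1 + t2 e^{-β})/(1 - e^{β})` (computed along any
reduced word `l` for `w`); equivalently, the `Q_{t1,t2}(Λ)`-module isomorphism `Φ` with
`Φ(y_w) = h_w` satisfies `Φ(Δ_w) = Y_w`, i.e. the coefficients of `Δ_w` in the basis
`{y_u}` are the Yang–Baxter coefficients `p(u,w)`. -/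
theorem delta_eq_sum_pCoeff_y
    {r : ℕ} {W : Type*} [Group W] [Fintype W] {M : CoxeterMatrix (Fin r)}
    (cs : CoxeterSystem M W)
    {Λ : Type*} [AddCommGroup Λ] (wΛ : W →* AddAut Λ) (α : Fin r → Λ)
    (coroot : Fin r → (Λ →+ ℤ))
    (hact : ∀ (i : Fin r) (lam : Λ), wΛ (cs.simple i) lam = lam - (coroot i lam) • α i)
    (hαα : ∀ i : Fin r, coroot i (α i) = 2)
    (hindep : LinearIndependent ℤ α)
    (hcart : ∀ i j : Fin r, i ≠ j →
      (M.M i j = 2 ∧ coroot i (α j) = 0 ∧ coroot j (α i) = 0) ∨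
      (M.M i j = 3 ∧ coroot i (α j) = -1 ∧ coroot j (α i) = -1) ∨
      (M.M i j = 4 ∧ coroot i (α j) * coroot j (α i) = 2 ∧
        coroot i (α j) < 0 ∧ coroot j (α i) < 0) ∨
      (M.M i j = 6 ∧ coroot i (α j) * coroot j (α i) = 3 ∧
        coroot i (α j) < 0 ∧ coroot j (α i) < 0))
    {K : Type*} [Field K] (exp : Multiplicative Λ →* Kˣ)
    (hexp_inj : Function.Injective exp)
    (t1 t2 : K) (wK : W →* RingAut K)
    (hwexp : ∀ (w : W) (lam : Λ),
      wK w ((exp (Multiplicative.ofAdd lam) : Kˣ) : K)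
        = ((exp (Multiplicative.ofAdd (wΛ w lam)) : Kˣ) : K))
    (hwt1 : ∀ w : W, wK w t1 = t1) (hwt2 : ∀ w : W, wK w t2 = t2)
    {H : Type*} [Ring H] [Algebra K H]
    (h : W → H) (hb : Module.Basis W K H)
    (hbasis : ∀ w : W, hb w = h w)
    (hone : h 1 = 1)
    (hmul : ∀ u v : W, cs.length (u * v) = cs.length u + cs.length v →
      h (u * v) = h u * h v)
    (hquad : ∀ i : Fin r,
      (h (cs.simple i) - algebraMap K H t1) * (h (cs.simple i) - algebraMap K H t2) = 0)
    (Y : W → H) (hY1 : Y 1 = 1)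
    (hYrec : ∀ (w : W) (i : Fin r), cs.length (w * cs.simple i) = cs.length w + 1 →
      Y (w * cs.simple i)
        = Y w * (h (cs.simple i) + algebraMap K H ((t1 + t2) / wK w (Eelt exp (α i)))))
    {D : Type*} [Ring D] (ι : K →+* D) (δ : W → D)
    (hδ1 : δ 1 = 1)
    (hδmul : ∀ u v : W, δ (u * v) = δ u * δ v)
    (hδcomm : ∀ (w : W) (c : K), δ w * ι c = ι (wK w c) * δ w)
    (hδindep : ∀ f : W → K, (∑ w : W, ι (f w) * δ w) = 0 → ∀ w, f w = 0)
    (yD : W → D) (hyD_one : yD 1 = 1)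
    (hyD_rec : ∀ (w : W) (i : Fin r), cs.length (w * cs.simple i) = cs.length w + 1 →
      yD (w * cs.simple i) = yD w * yElt cs exp t1 t2 α ι δ i)
    (w : W) (l : List (Fin r)) (hl : cs.wordProd l = w) (hred : cs.IsReduced l) :
    ι (Aword cs wΛ α exp t1 t2 l) * δ w = ∑ u : W, ι (pCoeff hb Y u w) * yD u :=
  delta_eq_sum_pCoeff_y_general cs wΛ α coroot hact hαα exp hexp_inj t1 t2 wK hwexp hwt1 hwt2 h hb
    hbasis hone hmul hquad Y hY1 hYrec ι δ hδ1 hδmul hδcomm yD hyD_one hyD_rec w l hl hred
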